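/- Let Ω be a positive diagonal matrix. The one-step map of the AAVF method applied to q'' + Ω²q = f(q), namely q₁ = cos(hΩ) q₀ + h sinc(hΩ) p₀ + h² φ₂(h²Ω²) ∫₀¹ f((1−σ)q₀ + σq₁) dσ, p₁ = −Ω sin(hΩ) q₀ + cos(hΩ) p₀ + h sinc(hΩ) ∫₀¹ f((1−σ)q₀ + σq₁) dσ, satisfies the momentum-like relation q₁ − q₀ = Ω⁻¹ tan(hΩ/2) (p₁ + p₀), provided cos(hω_j/2) ≠ 0 for each diagonal entry ω_j. -/

import Mathlib

noncomputable def phi2 (V : ℝ) : ℝ :=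
  if V = 0 then 1/2 else (1 - Real.cos (Real.sqrt V)) / V

noncomputable def sinc (y : ℝ) : ℝ :=
  if y = 0 then 1 else Real.sin y / y

/-! With `t = tan(hω/2)` the half-angle identities `t (1 + cos hω) = sin hω` and
`t sin hω = 1 - cos hω` turn `ω⁻¹ t (p₁ + p₀)` term by term into `q₁ - q₀`: the coefficients
of `q₀`, `p₀` and of the integral `I` match separately, so the integral never needs evaluating. -/

section

open Real hiding sinc

lemma sinc_eq_real_sinc : sinc = Real.sinc := rfl

lemma phi2_sq_of_ne_zero {x : ℝ} (hx : x ≠ 0) : phi2 (x ^ 2) = (1 - cos x) / x ^ 2 := by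
  rw [phi2, if_neg (pow_ne_zero 2 hx), sqrt_sq_eq_abs, cos_abs]

lemma tan_half_mul_one_add_cos {x : ℝ} (hc : cos (x / 2) ≠ 0) :
    tan (x / 2) * (1 + cos x) = sin x := by
  have hx : x = 2 * (x / 2) := by ring
  rw [tan_eq_sin_div_cos, hx, sin_two_mul, cos_two_mul, ← hx]
  field_simp
  ring

lemma tan_half_mul_sin {x : ℝ} (hc : cos (x / 2) ≠ 0) : tan (x / 2) * sin x = 1 - cos x := by
  have hx : x = 2 * (x / 2) := by ring
  rw [tan_eq_sin_div_cos, hx, sin_two_mul, cos_two_mul, ← hx]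
  field_simp
  linear_combination 2 * sin_sq_add_cos_sq (x / 2)

lemma aavf_step_sub_eq_inv_mul_tan_half_mul_add {ω h : ℝ} (hω : ω ≠ 0) (hh : h ≠ 0)
    (hc : cos (h * ω / 2) ≠ 0) (q₀ p₀ I : ℝ) :
    cos (h * ω) * q₀ + h * sinc (h * ω) * p₀ + h ^ 2 * phi2 ((h * ω) ^ 2) * I - q₀ =
      ω⁻¹ * tan (h * ω / 2) *
        (-ω * sin (h * ω) * q₀ + cos (h * ω) * p₀ + h * sinc (h * ω) * I + p₀) := by
  have hx : h * ω ≠ 0 := mul_ne_zero hh hω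
  rw [sinc_eq_real_sinc, Real.sinc_of_ne_zero hx, phi2_sq_of_ne_zero hx]
  field_simp
  linear_combination (ω ^ 2 * q₀ - I) * tan_half_mul_sin hc - ω * p₀ * tan_half_mul_one_add_cos hc

end

theorem stmt11_general (n : ℕ) (Ω : Fin n → ℝ) (hΩ : ∀ j, 0 < Ω j) (h : ℝ) (hh : 0 < h)
    (q₀ p₀ q₁ p₁ I : Fin n → ℝ)
    (hq : ∀ j, q₁ j = Real.cos (h * Ω j) * q₀ j + h * sinc (h * Ω j) * p₀ j
        + h^2 * phi2 ((h * Ω j)^2) * I j)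
    (hp : ∀ j, p₁ j = -(Ω j) * Real.sin (h * Ω j) * q₀ j + Real.cos (h * Ω j) * p₀ j
        + h * sinc (h * Ω j) * I j)
    (hcos : ∀ j, Real.cos (h * Ω j / 2) ≠ 0) :
    ∀ j, q₁ j - q₀ j = (Ω j)⁻¹ * Real.tan (h * Ω j / 2) * (p₁ j + p₀ j) := by
  intro j
  rw [hq j, hp j]
  exact aavf_step_sub_eq_inv_mul_tan_half_mul_add (hΩ j).ne' hh.ne' (hcos j) _ _ _

/-- One AAVF step satisfies the momentum-like relation
`q₁ − q₀ = Ω⁻¹ tan(hΩ/2)(p₁ + p₀)` (componentwise), provided `cos(hωⱼ/2) ≠ 0`. -/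
theorem stmt11 (n : ℕ) (Ω : Fin n → ℝ) (hΩ : ∀ j, 0 < Ω j) (h : ℝ) (hh : 0 < h)
    (f : (Fin n → ℝ) → (Fin n → ℝ)) (q₀ p₀ q₁ p₁ I : Fin n → ℝ)
    (hI : ∀ j, I j = ∫ σ in (0:ℝ)..1, f ((1 - σ) • q₀ + σ • q₁) j)
    (hq : ∀ j, q₁ j = Real.cos (h * Ω j) * q₀ j + h * sinc (h * Ω j) * p₀ j
        + h^2 * phi2 ((h * Ω j)^2) * I j)
    (hp : ∀ j, p₁ j = -(Ω j) * Real.sin (h * Ω j) * q₀ j + Real.cos (h * Ω j) * p₀ j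
        + h * sinc (h * Ω j) * I j)
    (hcos : ∀ j, Real.cos (h * Ω j / 2) ≠ 0) :
    ∀ j, q₁ j - q₀ j = (Ω j)⁻¹ * Real.tan (h * Ω j / 2) * (p₁ j + p₀ j) :=
  stmt11_general n Ω hΩ h hh q₀ p₀ q₁ p₁ I hq hp hcos
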